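/- Let ℓ ∈ ℕ. Every twice-differentiable solution a : (−1,1) → ℝ of Legendre's equation (1−τ²)·a″(τ) − 2τ·a′(τ) + ℓ(ℓ+1)·a(τ) = 0 that is bounded on (−1,1) is of the form a = C·P_ℓ for some constant C ∈ ℝ; consequently a extends continuously to [−1,1], with a(1) = C and a(−1) = (−1)^ℓ·C. (In the 4-dimensional setting these boundary values are the asymptotic charges Q₄(Y_{ℓ,m}, I⁺) = C and Q₄(Y_{ℓ,m}, I⁻) = (−1)^ℓ·C at the critical sets, giving infinitely many well-defined conserved charges.) -/

import Mathlib

/-- The Legendre polynomial `P_ν` via the Rodrigues formula. -/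
noncomputable def legendreP (ν : ℕ) (τ : ℝ) : ℝ :=
  ((-1 : ℝ) ^ ν / (2 ^ ν * Nat.factorial ν)) *
    iteratedDeriv ν (fun t : ℝ => (1 - t ^ 2) ^ ν) τ

/-!
The Rodrigues formula makes `P_ℓ` a polynomial solution of Legendre's equation with
`P_ℓ(1) = 1` and `P_ℓ(-1) = (-1)^ℓ`. The Wronskian `(1 - τ²)(a' P_ℓ - a P_ℓ')` of two solutions
is a constant `K`. Near `τ = 1` this gives `(a / P_ℓ)' = K / ((1 - τ²) P_ℓ²) ≈ K / (2 (1 - τ))`,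
so `a / P_ℓ` grows like `-(K / 2) log (1 - τ)` unless `K = 0`; boundedness of `a` forces `K = 0`.
Then `a` and `C P_ℓ` have the same Cauchy data at a point where `P_ℓ ≠ 0`, and on every compact
subinterval of `(-1, 1)` the equation is a regular linear ODE, so uniqueness gives `a = C P_ℓ`.
-/

open Polynomial Set Filter Topology
open scoped Nat NNReal

section
variable {R : Type*} [CommRing R]

theorem eval_iterate_derivative_X_sub_C_pow_mul (n : ℕ) (c : R) (f : R[X]) :
    (derivative^[n] ((X - C c) ^ n * f)).eval c = n ! * f.eval c := by
  rw [← factorial_smul_hasseDeriv, LinearMap.smul_apply, eval_smul, ← taylor_coeff, taylor_mul,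
    taylor_pow, map_sub, taylor_X, taylor_C, add_sub_cancel_right, coeff_X_pow_mul',
    if_pos le_rfl, Nat.sub_self, taylor_coeff_zero, nsmul_eq_mul]

theorem one_sub_X_sq_mul_derivative_pow (ℓ : ℕ) :
    (1 - X ^ 2) * derivative ((1 - X ^ 2 : R[X]) ^ ℓ) = -2 * (ℓ : R[X]) * X * (1 - X ^ 2) ^ ℓ := by
  rw [derivative_pow]
  simp only [derivative_sub, derivative_one, derivative_X_pow, map_natCast]
  rcases ℓ with _ | n
  · simp
  · push_cast
    ring

theorem one_sub_X_sq_mul_iterate_derivative_pow (ℓ k : ℕ) :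
    (1 - X ^ 2) * derivative^[k + 2] ((1 - X ^ 2 : R[X]) ^ ℓ)
      + 2 * ((ℓ : R[X]) - (k : R[X]) - 1) * X * derivative^[k + 1] ((1 - X ^ 2 : R[X]) ^ ℓ)
      + ((k : R[X]) + 1) * (2 * (ℓ : R[X]) - (k : R[X])) * derivative^[k] ((1 - X ^ 2 : R[X]) ^ ℓ)
      = 0 := by
  induction k with
  | zero =>
    have h := congrArg derivative (one_sub_X_sq_mul_derivative_pow (R := R) ℓ)
    simp only [derivative_mul, derivative_sub, derivative_one, derivative_X_pow,
      derivative_X, derivative_natCast, derivative_neg, derivative_ofNat, map_natCast] at h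
    simp only [Function.iterate_succ_apply', Function.iterate_zero_apply]
    push_cast at h ⊢
    linear_combination h
  | succ k ih =>
    have h := congrArg derivative ih
    simp only [derivative_add, derivative_mul, derivative_sub, derivative_one, derivative_X_pow,
      derivative_X, derivative_natCast, derivative_ofNat, derivative_zero, map_natCast,
      ← Function.iterate_succ_apply' derivative] at h
    push_cast at h ⊢
    linear_combination h
end

theorem Polynomial.iteratedDeriv_eval {𝕜 : Type*} [NontriviallyNormedField 𝕜] (p : 𝕜[X]) (n : ℕ) :
    iteratedDeriv n (fun x => p.eval x) = fun x => (derivative^[n] p).eval x := by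
  induction n with
  | zero => simp
  | succ n ih =>
    ext x
    rw [iteratedDeriv_succ, ih, Function.iterate_succ_apply', Polynomial.deriv]

noncomputable def legendrePoly (ℓ : ℕ) : ℝ[X] :=
  C ((-1 : ℝ) ^ ℓ / (2 ^ ℓ * ℓ !)) * derivative^[ℓ] ((1 - X ^ 2) ^ ℓ)

theorem legendreP_eq_eval (ℓ : ℕ) (τ : ℝ) : legendreP ℓ τ = (legendrePoly ℓ).eval τ := by
  have h : (fun t : ℝ => (1 - t ^ 2) ^ ℓ) = fun t => ((1 - X ^ 2 : ℝ[X]) ^ ℓ).eval t := by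
    simp
  rw [legendreP, legendrePoly, h, Polynomial.iteratedDeriv_eval, eval_mul, eval_C]

theorem legendreP_one (ℓ : ℕ) : legendreP ℓ 1 = 1 := by
  have h : (1 - X ^ 2 : ℝ[X]) ^ ℓ = (X - C 1) ^ ℓ * (-(X + 1)) ^ ℓ := by
    rw [← mul_pow, map_one]; ring
  rw [legendreP_eq_eval, legendrePoly, eval_mul, eval_C, h,
    eval_iterate_derivative_X_sub_C_pow_mul]
  simp only [eval_pow, eval_neg, eval_add, eval_X, eval_one]
  rw [show -(1 + 1 : ℝ) = -1 * 2 by norm_num, mul_pow]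
  field_simp
  rw [← pow_mul, mul_comm, pow_mul]; norm_num

theorem legendreP_neg_one (ℓ : ℕ) : legendreP ℓ (-1) = (-1) ^ ℓ := by
  have h : (1 - X ^ 2 : ℝ[X]) ^ ℓ = (X - C (-1)) ^ ℓ * (1 - X) ^ ℓ := by
    rw [← mul_pow, map_neg, map_one]; ring
  rw [legendreP_eq_eval, legendrePoly, eval_mul, eval_C, h,
    eval_iterate_derivative_X_sub_C_pow_mul]
  simp only [eval_pow, eval_sub, eval_X, eval_one]
  norm_num
  field_simp

theorem legendrePoly_ode (ℓ : ℕ) :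
    (1 - X ^ 2) * derivative (derivative (legendrePoly ℓ)) - 2 * X * derivative (legendrePoly ℓ)
      + (ℓ * (ℓ + 1) : ℝ[X]) * legendrePoly ℓ = 0 := by
  have h := one_sub_X_sq_mul_iterate_derivative_pow (R := ℝ) ℓ ℓ
  simp only [legendrePoly, derivative_C_mul, ← Function.iterate_succ_apply' derivative]
  linear_combination C ((-1 : ℝ) ^ ℓ / (2 ^ ℓ * ℓ !)) * h

def SolvesLegendreOn (μ : ℝ) (y : ℝ → ℝ) (s : Set ℝ) : Prop :=
  ∀ τ ∈ s, DifferentiableAt ℝ y τ ∧ DifferentiableAt ℝ (deriv y) τ ∧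
    (1 - τ ^ 2) * deriv (deriv y) τ - 2 * τ * deriv y τ + μ * y τ = 0

theorem solvesLegendreOn_legendreP (ℓ : ℕ) (s : Set ℝ) :
    SolvesLegendreOn (ℓ * (ℓ + 1)) (legendreP ℓ) s := by
  have hP : legendreP ℓ = fun τ => (legendrePoly ℓ).eval τ := funext (legendreP_eq_eval ℓ)
  have hP' : deriv (legendreP ℓ) = fun τ => (derivative (legendrePoly ℓ)).eval τ := by
    ext τ; rw [hP, Polynomial.deriv]
  have hP'' : deriv (deriv (legendreP ℓ)) =
      fun τ => (derivative (derivative (legendrePoly ℓ))).eval τ := by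
    ext τ; rw [hP', Polynomial.deriv]
  intro τ _
  refine ⟨hP ▸ Polynomial.differentiableAt _, hP' ▸ Polynomial.differentiableAt _, ?_⟩
  rw [hP'', hP', hP]
  simpa using congrArg (eval τ) (legendrePoly_ode ℓ)

theorem tendsto_atTop_of_div_one_sub_le_deriv {b b' : ℝ → ℝ} {c : ℝ} (hc : 0 < c)
    (hb : ∀ᶠ τ in 𝓝[<] 1, HasDerivAt b (b' τ) τ ∧ c / (1 - τ) ≤ b' τ) :
    Tendsto b (𝓝[<] 1) atTop := by
  obtain ⟨x₀, hx₀, hsub⟩ := mem_nhdsLT_iff_exists_Ioo_subset.mp hb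
  have hmono : MonotoneOn (fun τ => b τ + c * Real.log (1 - τ)) (Ioo x₀ 1) := by
    have hderiv : ∀ τ ∈ Ioo x₀ 1,
        HasDerivAt (fun τ => b τ + c * Real.log (1 - τ)) (b' τ - c / (1 - τ)) τ := by
      intro τ hτ
      have hlog := ((hasDerivAt_id' τ).const_sub 1).log (sub_ne_zero.2 hτ.2.ne')
      exact ((hsub hτ).1.add (hlog.const_mul c)).congr_deriv (by ring)
    refine monotoneOn_of_hasDerivWithinAt_nonneg (f' := fun τ => b' τ - c / (1 - τ))
      (convex_Ioo x₀ 1)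
      (fun τ hτ => (hderiv τ hτ).continuousAt.continuousWithinAt) (fun τ hτ => ?_)
      (fun τ hτ => ?_) <;> rw [interior_Ioo] at hτ
    · exact (hderiv τ hτ).hasDerivWithinAt
    · exact sub_nonneg.2 (hsub hτ).2
  have hlog : Tendsto (fun τ : ℝ => Real.log (1 - τ)) (𝓝[<] 1) atBot := by
    refine Real.tendsto_log_nhdsGT_zero.comp (tendsto_nhdsWithin_iff.2 ⟨?_, ?_⟩)
    · exact ((continuous_const.sub continuous_id).tendsto' 1 0 (sub_self 1)).mono_left
        nhdsWithin_le_nhds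
    · filter_upwards [self_mem_nhdsWithin] with τ hτ using sub_pos.2 (mem_Iio.1 hτ)
  obtain ⟨τ₁, hτ₁⟩ := nonempty_Ioo.2 (mem_Iio.1 hx₀)
  refine tendsto_atTop_mono' _ ?_ (tendsto_atTop_add_const_left _ (b τ₁ + c * Real.log (1 - τ₁))
    (tendsto_neg_atBot_atTop.comp (hlog.const_mul_atBot hc)))
  filter_upwards [Ioo_mem_nhdsLT hτ₁.2] with τ hτ
  have := hmono hτ₁ ⟨hτ₁.1.trans hτ.1, hτ.2⟩ hτ.1.le
  simp only [Function.comp_apply]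
  linarith

theorem eqOn_of_hasDerivAt_secondOrder_linear {p q y y' z z' : ℝ → ℝ} {a b t₀ : ℝ} {B : ℝ≥0}
    (hp : ∀ t ∈ Ioo a b, |p t| ≤ B) (hq : ∀ t ∈ Ioo a b, |q t| ≤ B)
    (hy : ∀ t ∈ Ioo a b, HasDerivAt y (y' t) t ∧ HasDerivAt y' (p t * y' t + q t * y t) t)
    (hz : ∀ t ∈ Ioo a b, HasDerivAt z (z' t) t ∧ HasDerivAt z' (p t * z' t + q t * z t) t)
    (ht₀ : t₀ ∈ Ioo a b) (h₀ : y t₀ = z t₀) (h₀' : y' t₀ = z' t₀) :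
    EqOn y z (Ioo a b) := by
  set v : ℝ → ℝ × ℝ → ℝ × ℝ := fun t w => (w.2, p t * w.2 + q t * w.1)
  have hv : ∀ t ∈ Ioo a b, LipschitzOnWith (1 + 2 * B) (v t) univ := by
    intro t ht
    refine LipschitzWith.lipschitzOnWith (LipschitzWith.of_dist_le_mul fun w w' => ?_)
    have h₁ : |w.1 - w'.1| ≤ dist w w' := by
      rw [Prod.dist_eq, ← Real.dist_eq]; exact le_max_left _ _
    have h₂ : |w.2 - w'.2| ≤ dist w w' := by
      rw [Prod.dist_eq, ← Real.dist_eq]; exact le_max_right _ _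
    have hB : (0 : ℝ) ≤ B := B.2
    have hd : 0 ≤ dist w w' := dist_nonneg
    rw [Prod.dist_eq, Real.dist_eq, Real.dist_eq]
    push_cast
    refine max_le (by nlinarith) ?_
    calc |p t * w.2 + q t * w.1 - (p t * w'.2 + q t * w'.1)|
        = |p t * (w.2 - w'.2) + q t * (w.1 - w'.1)| := by ring_nf
      _ ≤ |p t| * |w.2 - w'.2| + |q t| * |w.1 - w'.1| := by
        rw [← abs_mul, ← abs_mul]; exact abs_add_le _ _
      _ ≤ B * dist w w' + B * dist w w' := by
        gcongr
        exacts [hp t ht, hq t ht]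
      _ ≤ (1 + 2 * B) * dist w w' := by nlinarith
  have hsol := ODE_solution_unique_of_mem_Ioo (f := fun t => (y t, y' t))
    (g := fun t => (z t, z' t)) hv ht₀
    (fun t ht => ⟨(hy t ht).1.prodMk (hy t ht).2, mem_univ _⟩)
    (fun t ht => ⟨(hz t ht).1.prodMk (hz t ht).2, mem_univ _⟩) (by simp [h₀, h₀'])
  exact fun t ht => congrArg Prod.fst (hsol ht)

noncomputable def legendreWronskian (y z : ℝ → ℝ) (τ : ℝ) : ℝ :=
  (1 - τ ^ 2) * (deriv y τ * z τ - y τ * deriv z τ)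

namespace SolvesLegendreOn

variable {μ : ℝ} {y z : ℝ → ℝ} {s : Set ℝ}

theorem const_mul (hy : SolvesLegendreOn μ y s) (c : ℝ) :
    SolvesLegendreOn μ (fun τ => c * y τ) s := by
  intro τ hτ
  obtain ⟨hd, hd', hode⟩ := hy τ hτ
  simp only [deriv_const_mul_field']
  exact ⟨hd.const_mul c, hd'.const_mul c, by linear_combination c * hode⟩

theorem hasDerivAt_legendreWronskian (hy : SolvesLegendreOn μ y s) (hz : SolvesLegendreOn μ z s)
    {τ : ℝ} (hτ : τ ∈ s) : HasDerivAt (legendreWronskian y z) 0 τ := by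
  obtain ⟨hy₁, hy₂, hy₃⟩ := hy τ hτ
  obtain ⟨hz₁, hz₂, hz₃⟩ := hz τ hτ
  have h := ((hasDerivAt_id' τ).pow 2).const_sub 1 |>.mul
    ((hy₂.hasDerivAt.mul hz₁.hasDerivAt).sub (hy₁.hasDerivAt.mul hz₂.hasDerivAt))
  refine h.congr_deriv ?_
  simp only [Pi.mul_apply, Pi.sub_apply, Pi.pow_apply]
  linear_combination z τ * hy₃ - y τ * hz₃

theorem exists_legendreWronskian_eq (hs : IsOpen s) (hs' : IsPreconnected s)
    (hy : SolvesLegendreOn μ y s) (hz : SolvesLegendreOn μ z s) :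
    ∃ K, ∀ τ ∈ s, legendreWronskian y z τ = K :=
  hs.exists_is_const_of_deriv_eq_zero hs'
    (fun _ hτ => (hy.hasDerivAt_legendreWronskian hz hτ).differentiableAt.differentiableWithinAt)
    (fun _ hτ => (hy.hasDerivAt_legendreWronskian hz hτ).deriv)

theorem eqOn (hy : SolvesLegendreOn μ y (Ioo (-1) 1)) (hz : SolvesLegendreOn μ z (Ioo (-1) 1))
    {τ₀ : ℝ} (hτ₀ : τ₀ ∈ Ioo (-1) 1) (h₀ : y τ₀ = z τ₀) (h₀' : deriv y τ₀ = deriv z τ₀) :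
    EqOn y z (Ioo (-1) 1) := by
  intro τ hτ
  obtain ⟨r, hr, hr₁⟩ := exists_between (max_lt (abs_lt.2 hτ) (abs_lt.2 hτ₀))
  have hsub : Ioo (-r) r ⊆ Ioo (-1) 1 := Ioo_subset_Ioo (neg_le_neg hr₁.le) hr₁.le
  have hcoeff : ∀ t ∈ Ioo (-r) r, 1 - r ^ 2 ≤ 1 - t ^ 2 := fun t ht =>
    sub_le_sub_left (sq_le_sq' ht.1.le ht.2.le) 1
  have hr₀ : 0 < 1 - r ^ 2 := by nlinarith [abs_nonneg τ, le_max_left |τ| |τ₀|]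
  have hB : ∀ t ∈ Ioo (-r) r, ∀ c : ℝ, |c| ≤ 2 + |μ| →
      |c / (1 - t ^ 2)| ≤ (((2 + |μ|) / (1 - r ^ 2)).toNNReal : ℝ) := fun t ht c hc => by
    rw [abs_div, abs_of_pos (hr₀.trans_le (hcoeff t ht))]
    exact (div_le_div₀ (by positivity) hc hr₀ (hcoeff t ht)).trans (Real.le_coe_toNNReal _)
  have hsys : ∀ w : ℝ → ℝ, SolvesLegendreOn μ w (Ioo (-1) 1) → ∀ t ∈ Ioo (-r) r,
      HasDerivAt w (deriv w t) t ∧ HasDerivAt (deriv w)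
        (2 * t / (1 - t ^ 2) * deriv w t + -μ / (1 - t ^ 2) * w t) t := by
    intro w hw t ht
    obtain ⟨hw₁, hw₂, hw₃⟩ := hw t (hsub ht)
    refine ⟨hw₁.hasDerivAt, hw₂.hasDerivAt.congr_deriv ?_⟩
    field_simp [(hr₀.trans_le (hcoeff t ht)).ne']
    linear_combination hw₃
  have hτr : ∀ {t}, |t| ≤ max |τ| |τ₀| → t ∈ Ioo (-r) r := fun ht => abs_lt.1 (ht.trans_lt hr)
  refine eqOn_of_hasDerivAt_secondOrder_linear (fun t ht => hB t ht _ ?_)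
    (fun t ht => hB t ht _ (by rw [abs_neg]; linarith)) (hsys y hy) (hsys z hz)
    (hτr (le_max_right _ _)) h₀ h₀' (hτr (le_max_left _ _))
  rw [abs_mul, abs_two]
  nlinarith [abs_lt.2 ht, abs_nonneg μ]

theorem eqOn_const_mul_of_legendreWronskian_eq_zero (hy : SolvesLegendreOn μ y (Ioo (-1) 1))
    (hz : SolvesLegendreOn μ z (Ioo (-1) 1)) {τ₀ : ℝ} (hτ₀ : τ₀ ∈ Ioo (-1) 1) (hz₀ : z τ₀ ≠ 0)
    (hW : legendreWronskian y z τ₀ = 0) :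
    EqOn y (fun τ => y τ₀ / z τ₀ * z τ) (Ioo (-1) 1) := by
  refine hy.eqOn (hz.const_mul _) hτ₀ (div_mul_cancel₀ _ hz₀).symm ?_
  rw [legendreWronskian, mul_eq_zero, or_iff_right, sub_eq_zero] at hW
  · rw [deriv_const_mul_field']
    dsimp only
    rw [div_mul_eq_mul_div, eq_div_iff hz₀, hW]
  · nlinarith [hτ₀.1, hτ₀.2]

end SolvesLegendreOn

theorem eq_zero_of_legendreWronskian_eq_of_bounded {y z : ℝ → ℝ} {K M : ℝ}
    (hz : ContinuousAt z 1) (hz₁ : z 1 ≠ 0)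
    (h : ∀ᶠ τ in 𝓝[<] 1, DifferentiableAt ℝ y τ ∧ DifferentiableAt ℝ z τ ∧
      legendreWronskian y z τ = K ∧ |y τ| ≤ M) :
    K = 0 := by
  by_contra hK
  have hzB : ∀ᶠ τ in 𝓝 1, (1 + τ) * z τ ^ 2 < 2 * z 1 ^ 2 + 1 :=
    ((continuousAt_const.add continuousAt_id).mul (hz.pow 2)).eventually_lt continuousAt_const
      (by norm_num)
  have hzinv : ∀ᶠ τ in 𝓝 1, |z τ|⁻¹ < |z 1|⁻¹ + 1 :=
    (hz.abs.inv₀ (abs_ne_zero.2 hz₁)).eventually_lt continuousAt_const (lt_add_one _)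
  have hev := h.and <| Eventually.and (Ioo_mem_nhdsLT (show (-1 : ℝ) < 1 by norm_num)) <|
    nhdsWithin_le_nhds (hzB.and (hzinv.and (hz.eventually_ne hz₁)))
  -- `(K y / z)' = K² / ((1 - τ²) z²)` is bounded below by a positive multiple of `1 / (1 - τ)`
  have htop : Tendsto (fun τ => K * (y τ / z τ)) (𝓝[<] 1) atTop := by
    refine tendsto_atTop_of_div_one_sub_le_deriv (b' := fun τ => K ^ 2 / ((1 - τ ^ 2) * z τ ^ 2))
      (c := K ^ 2 / (2 * z 1 ^ 2 + 1)) (by positivity) ?_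
    filter_upwards [hev] with τ ⟨⟨hy, hzd, hW, _⟩, hτ, hB, _, hne⟩
    have h1 : 0 < 1 - τ := sub_pos.2 hτ.2
    have h2 : 0 < 1 + τ := by linarith [hτ.1]
    refine ⟨((hy.hasDerivAt.div hzd.hasDerivAt hne).const_mul K).congr_deriv ?_, ?_⟩
    · rw [← hW, legendreWronskian]
      field_simp
    · rw [div_div, show (1 - τ ^ 2) * z τ ^ 2 = (1 - τ) * ((1 + τ) * z τ ^ 2) by ring,
        mul_comm (2 * z 1 ^ 2 + 1)]
      exact div_le_div_of_nonneg_left (sq_nonneg K) (by positivity) (by gcongr)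
  have hbdd : ∀ᶠ τ in 𝓝[<] 1, K * (y τ / z τ) ≤ |K| * (M * (|z 1|⁻¹ + 1)) := by
    filter_upwards [hev] with τ ⟨⟨_, _, _, hM⟩, _, _, hinv, _⟩
    calc K * (y τ / z τ) ≤ |K| * (|y τ| * |z τ|⁻¹) := by
          rw [← abs_inv, ← abs_mul, ← abs_mul]; exact le_abs_self _
      _ ≤ |K| * (M * (|z 1|⁻¹ + 1)) := by gcongr; linarith [abs_nonneg (y τ)]
  obtain ⟨τ, hgt, hle⟩ := ((htop.eventually_gt_atTop _).and hbdd).exists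
  exact hle.not_gt hgt

theorem continuous_legendreP (ℓ : ℕ) : Continuous (legendreP ℓ) := by
  simpa only [funext (legendreP_eq_eval ℓ)] using (legendrePoly ℓ).continuous

/-- every bounded solution of Legendre's equation with `λ = ℓ(ℓ+1)` on
`(-1,1)` is `C·P_ℓ`; it extends continuously to `[-1,1]` with boundary values `C` at
`τ = 1` and `(-1)^ℓ C` at `τ = -1` (the asymptotic charges at the critical sets). -/
theorem stmt_15 (ℓ : ℕ) (a : ℝ → ℝ)
    (hdiff : ∀ τ ∈ Set.Ioo (-1 : ℝ) 1,
      DifferentiableAt ℝ a τ ∧ DifferentiableAt ℝ (deriv a) τ)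
    (hode : ∀ τ ∈ Set.Ioo (-1 : ℝ) 1,
      (1 - τ ^ 2) * deriv (deriv a) τ - 2 * τ * deriv a τ
        + (ℓ : ℝ) * ((ℓ : ℝ) + 1) * a τ = 0)
    (hbdd : ∃ M : ℝ, ∀ τ ∈ Set.Ioo (-1 : ℝ) 1, |a τ| ≤ M) :
    ∃ C : ℝ,
      (∀ τ ∈ Set.Ioo (-1 : ℝ) 1, a τ = C * legendreP ℓ τ) ∧
      Filter.Tendsto a (nhdsWithin 1 (Set.Ioo (-1 : ℝ) 1)) (nhds C) ∧
      Filter.Tendsto a (nhdsWithin (-1) (Set.Ioo (-1 : ℝ) 1)) (nhds ((-1 : ℝ) ^ ℓ * C)) := by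
  obtain ⟨M, hM⟩ := hbdd
  have ha : SolvesLegendreOn (ℓ * (ℓ + 1)) a (Ioo (-1) 1) :=
    fun τ hτ => ⟨(hdiff τ hτ).1, (hdiff τ hτ).2, hode τ hτ⟩
  have hP := solvesLegendreOn_legendreP ℓ (Ioo (-1) 1)
  obtain ⟨K, hK⟩ := ha.exists_legendreWronskian_eq isOpen_Ioo isPreconnected_Ioo hP
  have hI : Ioo (-1 : ℝ) 1 ∈ 𝓝[<] 1 := Ioo_mem_nhdsLT (by norm_num)
  have hP₁ : legendreP ℓ 1 ≠ 0 := by rw [legendreP_one]; exact one_ne_zero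
  have hK₀ : K = 0 := by
    refine eq_zero_of_legendreWronskian_eq_of_bounded (y := a) (M := M)
      (continuous_legendreP ℓ).continuousAt hP₁ ?_
    filter_upwards [hI] with τ hτ
    exact ⟨(hdiff τ hτ).1, (hP τ hτ).1, hK τ hτ, hM τ hτ⟩
  obtain ⟨τ₀, hτ₀, hPτ₀⟩ := (Eventually.and hI (nhdsWithin_le_nhds
    ((continuous_legendreP ℓ).continuousAt.eventually_ne hP₁))).exists
  set C := a τ₀ / legendreP ℓ τ₀
  have haC := ha.eqOn_const_mul_of_legendreWronskian_eq_zero hP hτ₀ hPτ₀ (hK₀ ▸ hK τ₀ hτ₀)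
  have hlim : ∀ x, Tendsto a (𝓝[Ioo (-1) 1] x) (𝓝 (C * legendreP ℓ x)) := fun x =>
    (((continuous_legendreP ℓ).const_mul C).tendsto x).mono_left nhdsWithin_le_nhds |>.congr'
      (eventually_nhdsWithin_of_forall fun τ hτ => (haC hτ).symm)
  refine ⟨C, fun τ hτ => haC hτ, ?_, ?_⟩
  · simpa [legendreP_one] using hlim 1
  · simpa [legendreP_neg_one, mul_comm] using hlim (-1)
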